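/- Let S ⊆ ℝ^d be a closed set which is wedged at every point of its boundary, and let x ∈ ∂S. Then, writing S' = closure(ℝ^d ∖ S), one has N_S^C(x) = −N_{S'}^C(x) and T_S^C(x) = −T_{S'}^C(x). -/

import Mathlib

open Set Metric Filter Topology MeasureTheory
open scoped Pointwise

noncomputable section

/-- Euclidean space `ℝ^d`. -/
abbrev Euc (d : ℕ) := EuclideanSpace ℝ (Fin d)


/-- Real inner product on `ℝ^d`. -/
def rinner {d : ℕ} (x y : Euc d) : ℝ := inner ℝ x y

/-- Limiting proximal normal directions to `S` at `x`. -/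
def limProxDirs {d : ℕ} (S : Set (Euc d)) (x : Euc d) : Set (Euc d) :=
  {v | ‖v‖ = 1 ∧ ∃ y w : ℕ → Euc d,
    (∀ n, y n ∈ S) ∧ Tendsto y atTop (𝓝 x) ∧
    (∀ n, w n ≠ 0) ∧ Tendsto w atTop (𝓝 (0 : Euc d)) ∧
    (∀ n, infDist (y n + w n) S = ‖w n‖) ∧
    Tendsto (fun n => (‖w n‖)⁻¹ • w n) atTop (𝓝 v)}

/-- Clarke (proximal) normal cone to `S` at `x`. -/
def clarkeNormalCone {d : ℕ} (S : Set (Euc d)) (x : Euc d) : Set (Euc d) :=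
  {p | ∃ lam : ℝ, 0 ≤ lam ∧
    ∃ ξ ∈ closure (convexHull ℝ ({0} ∪ limProxDirs S x)), p = lam • ξ}

/-- `S` is wedged at `x` if its Clarke normal cone at `x` is pointed. -/
def WedgedAt {d : ℕ} (S : Set (Euc d)) (x : Euc d) : Prop :=
  clarkeNormalCone S x ∩ (-(clarkeNormalCone S x)) = {0}

/-- Clarke tangent cone: the polar cone of the Clarke normal cone. -/
def clarkeTangentCone {d : ℕ} (S : Set (Euc d)) (x : Euc d) : Set (Euc d) :=
  {v | ∀ p ∈ clarkeNormalCone S x, rinner p v ≤ 0}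

/-- Bouligand tangent cone. -/
def bouligandCone {d : ℕ} (S : Set (Euc d)) (x : Euc d) : Set (Euc d) :=
  {v | Filter.liminf (fun t : ℝ => infDist (x + t • v) S / t) (𝓝[>] (0:ℝ)) = 0}

/-- The wedge `W(v, ε) = {s • w : w ∈ v + εB, s ∈ [0, ε]}`. -/
def wedge {d : ℕ} (v : Euc d) (ε : ℝ) : Set (Euc d) :=
  {p | ∃ w ∈ ball v ε, ∃ s ∈ Icc (0:ℝ) ε, p = s • w}

/-- Signed distance function of a closed set. -/
def signedDistFn {d : ℕ} (Z : Set (Euc d)) (x : Euc d) : ℝ :=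
  infDist x Z - infDist x (closure Zᶜ)

/-- `r`-inner approximation `S_r = {x : dist(x, ℝ^d ∖ S) ≥ r}`. -/
def innerApprox {d : ℕ} (S : Set (Euc d)) (r : ℝ) : Set (Euc d) :=
  {x | r ≤ infDist x Sᶜ}

/-- `Q(S,r) = S ∖ interior S_r`. -/
def crown {d : ℕ} (S : Set (Euc d)) (r : ℝ) : Set (Euc d) :=
  S \ interior (innerApprox S r)

/-- `r(x) = dist(x, closure(ℝ^d ∖ S))`. -/
def bdist {d : ℕ} (S : Set (Euc d)) (x : Euc d) : ℝ := infDist x (closure Sᶜ)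

/-- (F1): continuity on `ℝ^d × U` and uniform Lipschitz continuity in the state. -/
def CondF1 {d m : ℕ} (f : Euc d → Euc m → Euc d) (Uset : Set (Euc m)) : Prop :=
  ContinuousOn (fun p : Euc d × Euc m => f p.1 p.2) (univ ×ˢ Uset) ∧
  ∃ Lf : ℝ, 0 ≤ Lf ∧ ∀ x y : Euc d, ∀ u ∈ Uset, ‖f x u - f y u‖ ≤ Lf * ‖x - y‖

/-- (F2): sublinear growth. -/
def CondF2 {d m : ℕ} (f : Euc d → Euc m → Euc d) (Uset : Set (Euc m)) : Prop :=
  ∃ Cf : ℝ, 0 ≤ Cf ∧ ∀ (x : Euc d), ∀ u ∈ Uset, ‖f x u‖ ≤ Cf * (1 + ‖x‖)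

/-- (F3): convexity of velocity sets. -/
def CondF3 {d m : ℕ} (f : Euc d → Euc m → Euc d) (Uset : Set (Euc m)) : Prop :=
  ∀ x : Euc d, Convex ℝ ((fun u => f x u) '' Uset)

/-- (S1): `S` compact and wedged at every boundary point. -/
def CondS1 {d : ℕ} (S : Set (Euc d)) : Prop :=
  IsCompact S ∧ ∀ x ∈ frontier S, WedgedAt S x

/-- (S2): strict inwardness. -/
def CondS2 {d m : ℕ} (f : Euc d → Euc m → Euc d) (Uset : Set (Euc m)) (S : Set (Euc d)) : Prop :=
  ∀ x ∈ frontier S, ∀ p ∈ clarkeNormalCone S x, p ≠ 0 → ∃ u ∈ Uset, rinner (f x u) p < 0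

/-- A measurable open-loop control with values in `Uset` on `[0,T]`. -/
def IsAdmControl {m : ℕ} (Uset : Set (Euc m)) (T : ℝ) (u : ℝ → Euc m) : Prop :=
  Measurable u ∧ ∀ t ∈ Icc (0:ℝ) T, u t ∈ Uset

/-- Carathéodory solution of `ẋ = f(x,u(t))` on `[0,T]` with `x(0) = x0`. -/
def IsOLSol {d m : ℕ} (f : Euc d → Euc m → Euc d) (u : ℝ → Euc m) (T : ℝ)
    (x0 : Euc d) (x : ℝ → Euc d) : Prop :=
  ContinuousOn x (Icc 0 T) ∧ x 0 = x0 ∧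
  IntegrableOn (fun s => f (x s) (u s)) (Icc 0 T) ∧
  ∀ t ∈ Icc (0:ℝ) T, x t = x0 + ∫ s in (0:ℝ)..t, f (x s) (u s)

/-- Open loop `S`-constrained controllability to `Sig`. -/
def OLConstrainedControllable {d m : ℕ} (f : Euc d → Euc m → Euc d) (Uset : Set (Euc m))
    (S Sig : Set (Euc d)) : Prop :=
  ∀ x0 ∈ S, ∃ T : ℝ, 0 ≤ T ∧ ∃ u : ℝ → Euc m, IsAdmControl Uset T u ∧
    ∃ x : ℝ → Euc d, IsOLSol f u T x0 x ∧ (∀ t ∈ Icc (0:ℝ) T, x t ∈ S) ∧ x T ∈ Sig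

/-- A finite patchy feedback `(Ω_1,…,Ω_N; u_1,…,u_N)` for `f` on the open set `D`. -/
structure IsPatchyFeedback {d m : ℕ} (f : Euc d → Euc m → Euc d) (Uset : Set (Euc m))
    (D : Set (Euc d)) {N : ℕ} (Ω : Fin N → Set (Euc d)) (uv : Fin N → Euc m) : Prop where
  patch_open : ∀ i, IsOpen (Ω i)
  ctrl_mem : ∀ i, uv i ∈ Uset
  cover : D = ⋃ i, Ω i
  inward : ∀ i : Fin N, ∀ x ∈ frontier (Ω i) \ ⋃ j ∈ Ioi i, Ω j,
    f x (uv i) ∈ interior (bouligandCone (Ω i) x)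

/-- `U` is the feedback law associated with the patches `(Ω_i, u_i)`:
`U(x) = u_{i*(x)}` with `i*(x) = max {i : x ∈ Ω_i}`. -/
def IsFeedbackLaw {d m N : ℕ} (Ω : Fin N → Set (Euc d)) (uv : Fin N → Euc m)
    (U : Euc d → Euc m) : Prop :=
  ∀ i : Fin N, ∀ x ∈ Ω i \ ⋃ j ∈ Ioi i, Ω j, U x = uv i

/-- Carathéodory solution of the closed-loop system `ẋ = f(x, U(x))` on `[0,T]`,
with values in `D`, starting at `x0`. -/
def IsCLSol {d m : ℕ} (f : Euc d → Euc m → Euc d) (U : Euc d → Euc m) (D : Set (Euc d))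
    (T : ℝ) (x0 : Euc d) (x : ℝ → Euc d) : Prop :=
  ContinuousOn x (Icc 0 T) ∧ x 0 = x0 ∧ (∀ s ∈ Icc (0:ℝ) T, x s ∈ D) ∧
  IntegrableOn (fun s => f (x s) (U (x s))) (Icc 0 T) ∧
  ∀ t ∈ Icc (0:ℝ) T, x t = x0 + ∫ s in (0:ℝ)..t, f (x s) (U (x s))

/-- A closed-loop solution that cannot be extended to a strictly larger time interval. -/
def MaximalCLSol {d m : ℕ} (f : Euc d → Euc m → Euc d) (U : Euc d → Euc m) (D : Set (Euc d))
    (T : ℝ) (x0 : Euc d) (x : ℝ → Euc d) : Prop :=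
  IsCLSol f U D T x0 x ∧
  ¬ ∃ T' : ℝ, T < T' ∧ ∃ x' : ℝ → Euc d, IsCLSol f U D T' x0 x' ∧ ∀ t ∈ Icc (0:ℝ) T, x' t = x t

/-- Carathéodory solution of the autonomous equation `ẋ = g(x)` on `[a,b]` with values in `Ω`. -/
def IsPVFSol {d : ℕ} (g : Euc d → Euc d) (Ω : Set (Euc d)) (a b : ℝ) (γ : ℝ → Euc d) : Prop :=
  ContinuousOn γ (Icc a b) ∧ (∀ t ∈ Icc a b, γ t ∈ Ω) ∧
  IntegrableOn (fun s => g (γ s)) (Icc a b) ∧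
  ∀ t ∈ Icc a b, γ t = γ a + ∫ s in a..t, g (γ s)

/-- A patchy vector field `g` on the open set `Ω` with patches `(Ω_α, g_α)`. -/
structure IsPatchyVF {d : ℕ} (A : Type) [LinearOrder A] (Ωa : A → Set (Euc d))
    (ga : A → Euc d → Euc d) (Ω : Set (Euc d)) (g : Euc d → Euc d) : Prop where
  patch_open : ∀ α, IsOpen (Ωa α)
  cover : Ω = ⋃ α, Ωa α
  locFin : LocallyFinite Ωa
  lip : ∀ α, ∃ K : NNReal, LipschitzWith K (ga α)
  inward : ∀ α, ∀ x ∈ frontier (Ωa α), ga α x ∈ interior (bouligandCone (Ωa α) x)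
  sel : ∀ x ∈ Ω, ∃ α, x ∈ Ωa α ∧ (∀ β, x ∈ Ωa β → β ≤ α) ∧ g x = ga α x

/-!
Wedgedness at `x` says that `0` is not in the convex hull of the compact set of limiting proximal
directions. Hence the Clarke normal cone is closed (so it is the bipolar of those directions) and
some `v` has `⟪ζ, v⟫ ≤ -δ < 0` for every limiting proximal direction `ζ`. Such a `v` is
hypertangent to `S`: points of `S` near `x` pushed along directions near `v` stay in `S`, because
along such a path the squared distance to `S` has nonpositive right Dini derivative. Hypertangency
of `v` to `S` is hypertangency of `-v` to `S' = closure Sᶜ`, and hypertangent vectors make obtuse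
angles with all limiting proximal directions. Perturbing an element of the polar of the
directions of `S` by `v` thus puts its negative in the polar of the directions of `S'`. This
inclusion makes `S'` wedged at `x` too, and `closure S'ᶜ = closure (interior S) = S`, so it also
holds with `S` and `S'` exchanged: the two polars are opposite, and polarity gives both claims.
-/

open scoped RealInnerProductSpace
open ProperCone (innerDual mem_innerDual)

section ConvexGeometry

variable {E : Type*} [NormedAddCommGroup E] [NormedSpace ℝ E]

-- By Carathéodory, every point of the hull is a convex combination of `finrank + 1` points.
theorem isCompact_convexHull [FiniteDimensional ℝ E] {s : Set E} (hs : IsCompact s) :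
    IsCompact (convexHull ℝ s) := by
  rcases s.eq_empty_or_nonempty with rfl | ⟨z₀, hz₀⟩
  · simp
  set n := Module.finrank ℝ E + 1
  suffices convexHull ℝ s = (fun p : (Fin n → ℝ) × (Fin n → E) => ∑ i, p.1 i • p.2 i) ''
      (stdSimplex ℝ (Fin n) ×ˢ univ.pi fun _ => s) by
    rw [this]
    exact ((isCompact_stdSimplex ℝ (Fin n)).prod (isCompact_univ_pi fun _ => hs)).image
      (by fun_prop)
  refine subset_antisymm (fun x hx => ?_) ?_
  · obtain ⟨ι, _, z, w, hzs, hind, hw, hw1, rfl⟩ := eq_pos_convex_span_of_mem_convexHull hx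
    obtain ⟨e⟩ : Nonempty (ι ↪ Fin n) := Function.Embedding.nonempty_of_card_le <| by
      simpa using hind.card_le_finrank_succ.trans
        (Nat.add_le_add_right (Submodule.finrank_le _) 1)
    set w' := Function.extend e w 0
    set z' := Function.extend e z fun _ => z₀
    have hw' (i : Fin n) (hi : i ∉ range e) : w' i = 0 := Function.extend_apply' _ _ _ hi
    have hz' (i : Fin n) (hi : i ∉ range e) : z' i = z₀ := Function.extend_apply' _ _ _ hi
    refine ⟨(w', z'), ⟨⟨fun i => ?_, ?_⟩, fun i _ => ?_⟩, ?_⟩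
    · by_cases hi : i ∈ range e
      · obtain ⟨j, rfl⟩ := hi
        simpa [w', e.injective.extend_apply] using (hw j).le
      · simp [hw' i hi]
    · rw [← hw1]
      exact (Fintype.sum_of_injective e e.injective w w' hw'
        fun i => (e.injective.extend_apply w 0 i).symm).symm
    · by_cases hi : i ∈ range e
      · obtain ⟨j, rfl⟩ := hi
        simpa [z', e.injective.extend_apply] using hzs ⟨j, rfl⟩
      · simpa [hz' i hi] using hz₀
    · refine (Fintype.sum_of_injective e e.injective (fun i => w i • z i) _
        (fun i hi => by simp [hw' i hi]) fun i => ?_).symm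
      simp [w', z', e.injective.extend_apply]
  · rintro _ ⟨⟨w, z⟩, ⟨hw, hz⟩, rfl⟩
    show ∑ i, w i • z i ∈ _
    rw [← Finset.centerMass_eq_of_sum_1 _ _ hw.2]
    exact Finset.centerMass_mem_convexHull _ (fun i _ => hw.1 i) (by rw [hw.2]; exact one_pos)
      fun i _ => hz i (mem_univ i)

theorem closure_convexHull_eq_convexHull_closure [FiniteDimensional ℝ E] {s : Set E}
    (hs : Bornology.IsBounded s) : closure (convexHull ℝ s) = convexHull ℝ (closure s) :=
  subset_antisymm
    (closure_minimal (convexHull_mono subset_closure)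
      (isCompact_convexHull hs.isCompact_closure).isClosed)
    (convexHull_min (closure_mono (subset_convexHull ℝ s)) (convex_convexHull ℝ s).closure)

theorem Ici_smul_convexHull_insert_zero (s : Set E) :
    Ici (0 : ℝ) • convexHull ℝ (insert 0 s) = insert 0 (Ici (0 : ℝ) • convexHull ℝ s) := by
  ext p
  constructor
  · rintro ⟨c, hc, ξ, hξ, rfl⟩
    rcases s.eq_empty_or_nonempty with rfl | hs
    · simp_all
    rw [convexHull_insert hs, convexJoin_singleton_left] at hξ
    obtain ⟨b, hb, hξ⟩ := mem_iUnion₂.1 hξ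
    obtain ⟨θ, ⟨hθ, -⟩, rfl⟩ := segment_eq_image' ℝ (0 : E) b ▸ hξ
    exact Or.inr ⟨c * θ, mul_nonneg hc hθ, b, hb, by simp [smul_smul]⟩
  · rintro (rfl | ⟨c, hc, b, hb, rfl⟩)
    · exact ⟨0, self_mem_Ici, 0, subset_convexHull ℝ _ (mem_insert _ _), zero_smul _ _⟩
    · exact ⟨c, hc, b, convexHull_mono (subset_insert _ _) hb, rfl⟩

theorem isClosed_Ici_smul {B : Set E} (hB : IsCompact B) (h0 : (0 : E) ∉ B) :
    IsClosed (Ici (0 : ℝ) • B) := by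
  rcases B.eq_empty_or_nonempty with rfl | hne
  · simp
  obtain ⟨b₀, hb₀, hmin⟩ := hB.exists_isMinOn hne continuous_norm.continuousOn
  have hm : 0 < ‖b₀‖ := norm_pos_iff.2 (ne_of_mem_of_not_mem hb₀ h0)
  refine isClosed_of_closure_subset fun p hp => ?_
  set R := ‖p‖ + 1
  -- near `p` only the scalars `c ≤ R / ‖b₀‖` matter, and `Icc 0 (R / ‖b₀‖) • B` is compact
  have hsub : ball 0 R ∩ Ici (0 : ℝ) • B ⊆ Icc (0 : ℝ) (R / ‖b₀‖) • B := by
    rintro _ ⟨hR, c, hc, b, hb, rfl⟩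
    refine ⟨c, ⟨hc, ?_⟩, b, hb, rfl⟩
    rw [mem_ball_zero_iff, norm_smul, Real.norm_of_nonneg hc] at hR
    rw [le_div_iff₀ hm]
    nlinarith [show ‖b₀‖ ≤ ‖b‖ from hmin hb, mem_Ici.1 hc]
  have hpR : p ∈ closure (ball 0 R ∩ Ici (0 : ℝ) • B) :=
    isOpen_ball.inter_closure ⟨mem_ball_zero_iff.2 (lt_add_one _), hp⟩
  exact smul_subset_smul_right Icc_subset_Ici_self
    (closure_minimal hsub (isCompact_Icc.smul_set hB).isClosed hpR)

theorem ConvexCone.coe_hull_eq_Ici_smul {s : Set E} (hs : Convex ℝ s) (h0 : (0 : E) ∈ s) :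
    (hull ℝ s : Set E) = Ici (0 : ℝ) • s := by
  ext p
  rw [SetLike.mem_coe, mem_hull_of_convex hs]
  constructor
  · rintro ⟨c, hc, ξ, hξ, rfl⟩
    exact ⟨c, hc.le, ξ, hξ, rfl⟩
  · rintro ⟨c, hc, ξ, hξ, rfl⟩
    rcases (mem_Ici.1 hc).eq_or_lt with rfl | hc
    · exact ⟨1, one_pos, 0, h0, by simp⟩
    · exact ⟨c, hc, ξ, hξ, rfl⟩

theorem PointedCone.exists_neg_mem_of_zero_mem_convexHull {K : PointedCone ℝ E} {s : Set E}
    (hs : s ⊆ K) (h : (0 : E) ∈ convexHull ℝ s) : ∃ z ∈ s, -z ∈ K := by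
  classical
  obtain ⟨ι, _, z, w, hzs, -, hw, hw1, hzero⟩ := eq_pos_convex_span_of_mem_convexHull h
  obtain ⟨j⟩ : Nonempty ι := by
    by_contra hι
    simp [not_nonempty_iff.1 hι] at hw1
  refine ⟨z j, hzs ⟨j, rfl⟩, ?_⟩
  have hzj : -z j = (w j)⁻¹ • ∑ i ∈ Finset.univ.erase j, w i • z i := by
    rw [eq_inv_smul_iff₀ (hw j).ne', smul_neg, neg_eq_iff_add_eq_zero,
      Finset.add_sum_erase _ (fun i => w i • z i) (Finset.mem_univ j), hzero]
  rw [hzj]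
  exact K.smul_mem (inv_nonneg.2 (hw j).le)
    (K.sum_mem fun i _ => K.smul_mem (hw i).le (hs (hzs ⟨i, rfl⟩)))

end ConvexGeometry

section Hypertangent

variable {E : Type*} [NormedAddCommGroup E] [NormedSpace ℝ E]

/-- Rockafellar's hypertangent condition `y + t • w ∈ A` for `y ∈ A` near `x`, `w` near `v` and
small `t > 0`, written with `y + t • ball v ε = ball (y + t • v) (t * ε)`. -/
def IsHypertangent (A : Set E) (x v : E) : Prop :=
  ∃ ε > 0, ∀ y ∈ A, dist y x < ε → ∀ t ∈ Ioc (0 : ℝ) ε, ball (y + t • v) (t * ε) ⊆ A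

namespace IsHypertangent

variable {A : Set E} {x v : E}

theorem exists_add_smul_mem (h : IsHypertangent A x v) :
    ∃ ε > 0, ∀ y ∈ A, dist y x < ε → ∀ t ∈ Ioc (0 : ℝ) ε, y + t • v ∈ A := by
  obtain ⟨ε, hε, h⟩ := h
  exact ⟨ε, hε, fun y hy hyx t ht => h y hy hyx t ht (mem_ball_self (mul_pos ht.1 hε))⟩

theorem mem_closure_interior (h : IsHypertangent A x v) (hx : x ∈ A) :
    x ∈ closure (interior A) := by
  obtain ⟨ε, hε, h⟩ := h
  have hint : ∀ t ∈ Ioc (0 : ℝ) ε, x + t • v ∈ interior A := fun t ht =>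
    interior_mono (h x hx (by simpa using hε) t ht)
      (by rw [isOpen_ball.interior_eq]; exact mem_ball_self (mul_pos ht.1 hε))
  have htend : Tendsto (fun t : ℝ => x + t • v) (𝓝[>] 0) (𝓝 x) :=
    ((by fun_prop : Continuous fun t : ℝ => x + t • v).tendsto' 0 x (by simp)).mono_left
      nhdsWithin_le_nhds
  exact mem_closure_of_tendsto htend (Filter.eventually_of_mem (Ioc_mem_nhdsGT hε) hint)

theorem closure_compl (h : IsHypertangent A x v) : IsHypertangent (closure Aᶜ) x (-v) := by
  obtain ⟨ε, hε, h⟩ := h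
  set ε' := min 1 (ε / (2 + ‖v‖))
  have hε'0 : 0 < ε' := lt_min one_pos (by positivity)
  have hε'1 : ε' ≤ 1 := min_le_left _ _
  have hε'ε : ε' * (2 + ‖v‖) ≤ ε :=
    (mul_le_mul_of_nonneg_right (min_le_right _ _) (by positivity)).trans_eq
      (div_mul_cancel₀ _ (by positivity))
  have hε'le : ε' ≤ ε := by nlinarith [norm_nonneg v]
  refine ⟨ε', hε'0, fun y hy hyx t ht z hz => ?_⟩
  -- if `z` were interior to `A`, the hypertangent ball at `z` would contain `y`
  by_contra hzA
  rw [_root_.closure_compl, mem_compl_iff, not_not] at hzA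
  rw [_root_.closure_compl] at hy
  apply hy
  have hzx : dist z x < ε :=
    calc dist z x ≤ dist z (y + t • -v) + dist (y + t • -v) y + dist y x := dist_triangle4 _ _ _ _
      _ < t * ε' + t * ‖v‖ + ε' := by
        rw [dist_self_add_left, norm_smul, norm_neg, Real.norm_of_nonneg ht.1.le]
        linarith [mem_ball.1 hz]
      _ ≤ ε' * (2 + ‖v‖) := by nlinarith [ht.1, ht.2, norm_nonneg v]
      _ ≤ ε := hε'ε
  have hball := h z (interior_subset hzA) hzx t ⟨ht.1, ht.2.trans hε'le⟩
  refine interior_maximal hball isOpen_ball (mem_ball.2 ?_)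
  calc dist y (z + t • v) = dist z (y + t • -v) := by
        rw [dist_eq_norm, dist_eq_norm, ← norm_neg]
        congr 1
        module
    _ < t * ε' := mem_ball.1 hz
    _ ≤ t * ε := mul_le_mul_of_nonneg_left hε'le ht.1.le

end IsHypertangent

end Hypertangent

section InnerProductSpace

variable {F : Type*} [NormedAddCommGroup F] [InnerProductSpace ℝ F]

theorem exists_inner_le_neg_of_zero_notMem [CompleteSpace F] {B : Set F} (hconv : Convex ℝ B)
    (hB : IsClosed B) (h0 : (0 : F) ∉ B) : ∃ v : F, ∃ δ > 0, ∀ b ∈ B, ⟪b, v⟫ ≤ -δ := by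
  obtain ⟨f, u, hf0, hfB⟩ := geometric_hahn_banach_point_closed hconv hB h0
  refine ⟨-(InnerProductSpace.toDual ℝ F).symm f, u, by simpa using hf0, fun b hb => ?_⟩
  rw [inner_neg_right, real_inner_comm, InnerProductSpace.toDual_symm_apply]
  linarith [hfB b hb]

theorem ProperCone.coe_innerDual_neg [CompleteSpace F] (s : Set F) :
    (innerDual (-s) : Set F) = -innerDual s := by
  ext v
  simp only [SetLike.mem_coe, Set.mem_neg, mem_innerDual]
  constructor
  · intro h a ha
    simpa [inner_neg_left, inner_neg_right] using @h (-a) (by simpa using ha)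
  · intro h a ha
    simpa [inner_neg_left, inner_neg_right] using h ha

theorem inner_nonpos_of_infDist_eq_norm {A : Set F} {y w v : F} {ε : ℝ} (hε : 0 < ε)
    (hw : infDist (y + w) A = ‖w‖) (hv : ∀ t ∈ Ioc (0 : ℝ) ε, y + t • v ∈ A) : ⟪w, v⟫ ≤ 0 := by
  have hslope : ∀ t ∈ Ioc (0 : ℝ) ε, ⟪w, v⟫ ≤ t * ‖v‖ ^ 2 / 2 := fun t ht => by
    have hle : ‖w‖ ≤ ‖w - t • v‖ := by
      rw [← hw, ← add_sub_add_left_eq_sub w (t • v) y, ← dist_eq_norm]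
      exact infDist_le_dist_of_mem (hv t ht)
    have hsq := pow_le_pow_left₀ (norm_nonneg _) hle 2
    rw [norm_sub_sq_real, real_inner_smul_right, norm_smul, Real.norm_of_nonneg ht.1.le] at hsq
    nlinarith [ht.1]
  have hlim : Tendsto (fun t : ℝ => t * ‖v‖ ^ 2 / 2) (𝓝[>] 0) (𝓝 0) :=
    ((by fun_prop : Continuous fun t : ℝ => t * ‖v‖ ^ 2 / 2).tendsto' 0 0 (by simp)).mono_left
      nhdsWithin_le_nhds
  exact ge_of_tendsto hlim (Filter.eventually_of_mem (Ioc_mem_nhdsGT hε) hslope)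

theorem add_smul_mem_of_inner_nonpos [ProperSpace F] {A : Set F} (hA : IsClosed A) {y w : F}
    {t : ℝ} (ht : 0 ≤ t) (hy : y ∈ A)
    (h : ∀ s ∈ Ico 0 t, ∀ p ∈ A, infDist (y + s • w) A = dist (y + s • w) p →
      ⟪y + s • w - p, w⟫ ≤ 0) :
    y + t • w ∈ A := by
  -- the squared distance `G` is dominated by the smooth `‖y + z • w - p‖ ^ 2`, with contact at `s`
  set G : ℝ → ℝ := fun s => infDist (y + s • w) A ^ 2
  have hslope : ∀ s ∈ Ico 0 t, ∀ r, 0 < r → ∃ᶠ z in 𝓝[>] s, slope G s z < r := by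
    intro s hs r hr
    obtain ⟨p, hp, hpd⟩ := hA.exists_infDist_eq_dist ⟨y, hy⟩ (y + s • w)
    have hφ : HasDerivAt (fun z : ℝ => ‖y + z • w - p‖ ^ 2) (2 * ⟪y + s • w - p, w⟫) s := by
      simpa using (((hasDerivAt_id s).smul_const w).const_add y).sub_const p |>.norm_sq
    have hφr := hφ.hasDerivWithinAt.liminf_right_slope_le
      (lt_of_le_of_lt (by nlinarith [h s hs p hp hpd]) hr)
    refine (hφr.and_eventually self_mem_nhdsWithin).mono fun z ⟨hz, hsz⟩ => lt_of_le_of_lt ?_ hz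
    rw [slope_def_field, slope_def_field]
    refine div_le_div_of_nonneg_right ?_ (sub_pos.2 hsz).le
    have hGz : infDist (y + z • w) A ≤ ‖y + z • w - p‖ := by
      rw [← dist_eq_norm]
      exact infDist_le_dist_of_mem hp
    simp only [G, hpd, dist_eq_norm]
    gcongr
    exact infDist_nonneg
  have hG : G t ≤ 0 := image_le_of_liminf_slope_right_le_deriv_boundary (B := fun _ => 0)
    (by fun_prop) (by simp [G, infDist_zero_of_mem hy]) continuousOn_const
    (fun s _ => hasDerivWithinAt_const s _ 0) hslope ⟨ht, le_rfl⟩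
  rw [hA.mem_iff_infDist_zero ⟨y, hy⟩]
  exact pow_eq_zero_iff two_ne_zero |>.1 (le_antisymm hG (sq_nonneg _))

end InnerProductSpace

section ClarkeCones

variable {d : ℕ} {S : Set (Euc d)} {x : Euc d}

theorem closure_limProxDirs_subset_sphere (S : Set (Euc d)) (x : Euc d) :
    closure (limProxDirs S x) ⊆ sphere 0 1 :=
  closure_minimal (fun _ hζ => mem_sphere_zero_iff_norm.2 hζ.1) isClosed_sphere

theorem isCompact_closure_limProxDirs (S : Set (Euc d)) (x : Euc d) :
    IsCompact (closure (limProxDirs S x)) :=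
  (isCompact_sphere 0 1).of_isClosed_subset isClosed_closure
    (closure_limProxDirs_subset_sphere S x)

theorem clarkeNormalCone_eq_Ici_smul (S : Set (Euc d)) (x : Euc d) :
    clarkeNormalCone S x =
      Ici (0 : ℝ) • closure (convexHull ℝ (insert 0 (limProxDirs S x))) := by
  ext p
  simp only [clarkeNormalCone, singleton_union, Set.mem_smul, mem_Ici, mem_ofPred_eq]
  constructor <;> rintro ⟨c, hc, ξ, hξ, rfl⟩ <;> exact ⟨c, hc, ξ, hξ, rfl⟩

theorem clarkeNormalCone_eq_insert_zero (S : Set (Euc d)) (x : Euc d) :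
    clarkeNormalCone S x =
      insert 0 (Ici (0 : ℝ) • convexHull ℝ (closure (limProxDirs S x))) := by
  have hbdd : Bornology.IsBounded (insert 0 (limProxDirs S x)) :=
    (isBounded_sphere.subset ((subset_closure).trans
      (closure_limProxDirs_subset_sphere S x))).insert 0
  rw [clarkeNormalCone_eq_Ici_smul, closure_convexHull_eq_convexHull_closure hbdd,
    insert_eq, closure_union, closure_singleton, ← insert_eq, Ici_smul_convexHull_insert_zero]

theorem zero_mem_clarkeNormalCone (S : Set (Euc d)) (x : Euc d) :
    (0 : Euc d) ∈ clarkeNormalCone S x := by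
  rw [clarkeNormalCone_eq_insert_zero]
  exact mem_insert _ _

theorem closure_limProxDirs_subset_clarkeNormalCone (S : Set (Euc d)) (x : Euc d) :
    closure (limProxDirs S x) ⊆ clarkeNormalCone S x := by
  rw [clarkeNormalCone_eq_insert_zero]
  exact fun ζ hζ => Or.inr ⟨1, zero_le_one' ℝ, ζ, subset_convexHull ℝ _ hζ, one_smul ℝ ζ⟩

theorem limProxDirs_subset_clarkeNormalCone (S : Set (Euc d)) (x : Euc d) :
    limProxDirs S x ⊆ clarkeNormalCone S x :=
  subset_closure.trans (closure_limProxDirs_subset_clarkeNormalCone S x)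

def clarkeNormalPointedCone (S : Set (Euc d)) (x : Euc d) : PointedCone ℝ (Euc d) :=
  (ConvexCone.hull ℝ (closure (convexHull ℝ (insert 0 (limProxDirs S x))))).toPointedCone <|
    ConvexCone.subset_hull (subset_closure (subset_convexHull ℝ _ (mem_insert _ _)))

theorem coe_clarkeNormalPointedCone (S : Set (Euc d)) (x : Euc d) :
    (clarkeNormalPointedCone S x : Set (Euc d)) = clarkeNormalCone S x := by
  rw [clarkeNormalCone_eq_Ici_smul,
    ← ConvexCone.coe_hull_eq_Ici_smul (convex_convexHull ℝ _).closure
      (subset_closure (subset_convexHull ℝ _ (mem_insert _ _)))]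
  rfl

theorem WedgedAt.zero_notMem_convexHull (h : WedgedAt S x) :
    (0 : Euc d) ∉ convexHull ℝ (closure (limProxDirs S x)) := by
  intro h0
  obtain ⟨z, hz, hnz⟩ := (clarkeNormalPointedCone S x).exists_neg_mem_of_zero_mem_convexHull
    ((closure_limProxDirs_subset_clarkeNormalCone S x).trans
      (coe_clarkeNormalPointedCone S x).symm.subset) h0
  have hmem : z ∈ clarkeNormalCone S x ∩ -clarkeNormalCone S x :=
    ⟨closure_limProxDirs_subset_clarkeNormalCone S x hz,
      (coe_clarkeNormalPointedCone S x).subset hnz⟩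
  rw [h, mem_singleton_iff] at hmem
  simpa [hmem] using closure_limProxDirs_subset_sphere S x hz

theorem WedgedAt.isClosed_clarkeNormalCone (h : WedgedAt S x) :
    IsClosed (clarkeNormalCone S x) := by
  rw [clarkeNormalCone_eq_insert_zero, insert_eq]
  exact isClosed_singleton.union (isClosed_Ici_smul
    (isCompact_convexHull (isCompact_closure_limProxDirs S x)) h.zero_notMem_convexHull)

theorem WedgedAt.exists_inner_le_neg (h : WedgedAt S x) :
    ∃ v : Euc d, ∃ δ > 0, ∀ ζ ∈ limProxDirs S x, ⟪ζ, v⟫ ≤ -δ := by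
  obtain ⟨v, δ, hδ, hv⟩ := exists_inner_le_neg_of_zero_notMem (convex_convexHull ℝ _)
    (isCompact_convexHull (isCompact_closure_limProxDirs S x)).isClosed h.zero_notMem_convexHull
  exact ⟨v, δ, hδ, fun ζ hζ => hv ζ (subset_convexHull ℝ _ (subset_closure hζ))⟩

theorem clarkeNormalCone_subset_innerDual_innerDual (S : Set (Euc d)) (x : Euc d) :
    clarkeNormalCone S x ⊆ innerDual (innerDual (limProxDirs S x) : Set (Euc d)) := by
  set K := innerDual (innerDual (limProxDirs S x) : Set (Euc d))
  have hP : limProxDirs S x ⊆ K := fun ζ hζ => mem_innerDual.2 fun v hv => by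
    rw [real_inner_comm]
    exact mem_innerDual.1 hv hζ
  have hC : closure (convexHull ℝ (insert 0 (limProxDirs S x))) ⊆ K :=
    closure_minimal (convexHull_min (insert_subset K.zero_mem hP) K.convex) K.isClosed
  rw [clarkeNormalCone_eq_Ici_smul]
  rintro _ ⟨c, hc, ξ, hξ, rfl⟩
  exact K.smul_mem (hC hξ) hc

theorem clarkeNormalCone_eq_innerDual_innerDual (h : IsClosed (clarkeNormalCone S x)) :
    clarkeNormalCone S x = innerDual (innerDual (limProxDirs S x) : Set (Euc d)) := by
  refine (clarkeNormalCone_subset_innerDual_innerDual S x).antisymm ?_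
  let K : ProperCone ℝ (Euc d) :=
    ⟨clarkeNormalPointedCone S x, by rw [← coe_clarkeNormalPointedCone] at h; exact h⟩
  have hK : (K : Set (Euc d)) = clarkeNormalCone S x := coe_clarkeNormalPointedCone S x
  calc (innerDual (innerDual (limProxDirs S x) : Set (Euc d)) : Set (Euc d))
      ⊆ innerDual (innerDual (K : Set (Euc d)) : Set (Euc d)) :=
        ProperCone.innerDual_le_innerDual <| ProperCone.innerDual_le_innerDual <|
          hK ▸ limProxDirs_subset_clarkeNormalCone S x
    _ = clarkeNormalCone S x := by rw [ProperCone.innerDual_innerDual, hK]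

theorem clarkeTangentCone_eq_neg_innerDual (S : Set (Euc d)) (x : Euc d) :
    clarkeTangentCone S x = -(innerDual (limProxDirs S x) : Set (Euc d)) := by
  ext v
  simp only [clarkeTangentCone, rinner, mem_ofPred_eq, Set.mem_neg, SetLike.mem_coe,
    mem_innerDual, inner_neg_right, neg_nonneg]
  constructor
  · exact fun hv ζ hζ => hv ζ (limProxDirs_subset_clarkeNormalCone S x hζ)
  · intro hv p hp
    simpa [inner_neg_left, real_inner_comm] using
      clarkeNormalCone_subset_innerDual_innerDual S x hp (show -v ∈ innerDual _ from
        fun ζ hζ => by simpa [inner_neg_right] using hv hζ)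

end ClarkeCones

section Complement

variable {d : ℕ}

theorem IsHypertangent.inner_limProxDirs_nonpos {A : Set (Euc d)} {x v : Euc d}
    (h : IsHypertangent A x v) :
    ∀ ζ ∈ limProxDirs A x, ⟪ζ, v⟫ ≤ 0 := by
  obtain ⟨ε, hε, hA⟩ := h.exists_add_smul_mem
  rintro ζ ⟨-, y, w, hy, hyx, -, -, hprox, hζ⟩
  have hn : ∀ᶠ n in atTop, ⟪(‖w n‖)⁻¹ • w n, v⟫ ≤ 0 := by
    filter_upwards [Metric.tendsto_nhds.1 hyx ε hε] with n hn
    rw [real_inner_smul_left]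
    exact mul_nonpos_of_nonneg_of_nonpos (by positivity)
      (inner_nonpos_of_infDist_eq_norm hε (hprox n) (hA _ (hy n) hn))
  exact le_of_tendsto (hζ.inner tendsto_const_nhds) hn

theorem exists_inner_le_of_limProxDirs {A : Set (Euc d)} {x v : Euc d} {δ : ℝ} (hδ : 0 < δ)
    (hv : ∀ ζ ∈ limProxDirs A x, ⟪ζ, v⟫ ≤ -δ) :
    ∃ ρ > 0, ∀ y ∈ A, dist y x ≤ ρ → ∀ w : Euc d, ‖w‖ ≤ ρ → infDist (y + w) A = ‖w‖ →
      ⟪w, v⟫ ≤ -(δ / 2) * ‖w‖ := by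
  by_contra! hcon
  choose y hyA hyx w hw hprox hlt using fun n : ℕ => hcon (1 / (n + 1)) Nat.one_div_pos_of_nat
  have hw0 : ∀ n, w n ≠ 0 := fun n h => by simpa [h] using hlt n
  have hy : Tendsto y atTop (𝓝 x) := tendsto_iff_dist_tendsto_zero.2 <|
    squeeze_zero (fun _ => dist_nonneg) hyx tendsto_one_div_add_atTop_nhds_zero_nat
  have hw : Tendsto w atTop (𝓝 0) := tendsto_zero_iff_norm_tendsto_zero.2 <|
    squeeze_zero (fun _ => norm_nonneg _) hw tendsto_one_div_add_atTop_nhds_zero_nat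
  obtain ⟨ζ, hζ, φ, hφ, hlim⟩ := (isCompact_sphere (0 : Euc d) 1).tendsto_subseq
    (x := fun n => (‖w n‖)⁻¹ • w n) fun n => by simp [norm_smul, hw0 n]
  have hζP : ζ ∈ limProxDirs A x :=
    ⟨by simpa using hζ, y ∘ φ, w ∘ φ, fun _ => hyA _, hy.comp hφ.tendsto_atTop,
      fun _ => hw0 _, hw.comp hφ.tendsto_atTop, fun _ => hprox _, hlim⟩
  have hge : -(δ / 2) ≤ ⟪ζ, v⟫ := ge_of_tendsto (hlim.inner tendsto_const_nhds) <|
    Eventually.of_forall fun n => by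
      have hn := norm_pos_iff.2 (hw0 (φ n))
      rw [Function.comp_apply, real_inner_smul_left, le_inv_mul_iff₀ hn]
      linarith [hlt (φ n)]
  linarith [hv ζ hζP]

theorem isHypertangent_of_inner_le_neg {A : Set (Euc d)} (hA : IsClosed A) {x v : Euc d} {δ : ℝ}
    (hδ : 0 < δ) (hv : ∀ ζ ∈ limProxDirs A x, ⟪ζ, v⟫ ≤ -δ) : IsHypertangent A x v := by
  obtain ⟨ρ, hρ, hprox⟩ := exists_inner_le_of_limProxDirs hδ hv
  set M := ‖v‖ + 1
  have hM : 1 ≤ M := le_add_of_nonneg_left (norm_nonneg v)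
  set ε := min (min 1 (δ / 2)) (ρ / (3 * M))
  have hε : 0 < ε := lt_min (lt_min one_pos (half_pos hδ)) (by positivity)
  have hε1 : ε ≤ 1 := (min_le_left _ _).trans (min_le_left _ _)
  have hεδ : ε ≤ δ / 2 := (min_le_left _ _).trans (min_le_right _ _)
  have hερ : 3 * (ε * M) ≤ ρ := by
    have := (le_div_iff₀ (by positivity)).1 (min_le_right (min 1 (δ / 2)) (ρ / (3 * M)))
    linarith
  refine ⟨ε, hε, fun y hy hyx t ht z hz => ?_⟩
  set w := t⁻¹ • (z - y)
  have hzw : z = y + t • w := by simp [w, smul_inv_smul₀ ht.1.ne']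
  have hwv : ‖w - v‖ < ε := by
    have : w - v = t⁻¹ • (z - (y + t • v)) := by
      simp only [w, smul_sub, smul_add, inv_smul_smul₀ ht.1.ne']
      abel
    rw [this, norm_smul, Real.norm_of_nonneg (inv_nonneg.2 ht.1.le), ← dist_eq_norm,
      inv_mul_lt_iff₀ ht.1]
    exact mem_ball.1 hz
  have hwM : ‖w‖ ≤ M := by linarith [norm_le_norm_add_norm_sub' w v]
  rw [hzw]
  refine add_smul_mem_of_inner_nonpos hA ht.1.le hy fun s hs p hp hpd => ?_
  set q := y + s • w - p
  have hys : dist (y + s • w) y = s * ‖w‖ := by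
    rw [dist_self_add_left, norm_smul, Real.norm_of_nonneg hs.1]
  have hsw : s * ‖w‖ ≤ ε * M :=
    mul_le_mul (hs.2.le.trans ht.2) hwM (norm_nonneg _) hε.le
  have hq : ‖q‖ ≤ s * ‖w‖ := by
    rw [← dist_eq_norm, ← hpd, ← hys]
    exact infDist_le_dist_of_mem hy
  have hεM : ε ≤ ε * M := le_mul_of_one_le_right hε.le hM
  have hpx : dist p x ≤ ρ :=
    calc dist p x ≤ dist p (y + s • w) + dist (y + s • w) y + dist y x := dist_triangle4 _ _ _ _
      _ ≤ 3 * (ε * M) := by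
        rw [dist_comm, dist_eq_norm, hys]
        linarith [hyx.le]
      _ ≤ ρ := hερ
  have hqv := hprox p hp hpx q (by linarith) (by rw [add_sub_cancel, hpd, dist_eq_norm])
  calc ⟪q, w⟫ = ⟪q, v⟫ + ⟪q, w - v⟫ := by rw [← inner_add_right, add_sub_cancel]
    _ ≤ -(δ / 2) * ‖q‖ + ‖q‖ * ‖w - v‖ := add_le_add hqv (real_inner_le_norm _ _)
    _ ≤ 0 := by nlinarith [norm_nonneg q]

theorem WedgedAt.innerDual_limProxDirs_subset {S : Set (Euc d)} (hS : IsClosed S) {x : Euc d}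
    (h : WedgedAt S x) :
    (innerDual (limProxDirs S x) : Set (Euc d)) ⊆ -innerDual (limProxDirs (closure Sᶜ) x) := by
  obtain ⟨v, δ, hδ, hv⟩ := h.exists_inner_le_neg
  intro u hu
  -- `-u + t • v` is strictly inward for `S`, hence strictly outward for its complement
  have hmem : ∀ t : ℝ, 0 < t → -u + t • v ∈ innerDual (limProxDirs (closure Sᶜ) x) := by
    intro t ht
    have hin : ∀ ζ ∈ limProxDirs S x, ⟪ζ, -u + t • v⟫ ≤ -(t * δ) := fun ζ hζ => by
      rw [inner_add_right, inner_neg_right, real_inner_smul_right]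
      nlinarith [mem_innerDual.1 hu hζ, hv ζ hζ]
    refine mem_innerDual.2 fun ζ hζ => ?_
    have := (isHypertangent_of_inner_le_neg hS (mul_pos ht hδ) hin).closure_compl
      |>.inner_limProxDirs_nonpos ζ hζ
    rwa [inner_neg_right, neg_nonpos] at this
  have htend : Tendsto (fun t : ℝ => -u + t • v) (𝓝[>] 0) (𝓝 (-u)) :=
    ((by fun_prop : Continuous fun t : ℝ => -u + t • v).tendsto' 0 (-u) (by simp)).mono_left
      nhdsWithin_le_nhds
  exact (innerDual _).isClosed.mem_of_tendsto htend
    (eventually_nhdsWithin_of_forall fun t ht => hmem t ht)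

theorem closure_interior_eq_of_wedgedAt {S : Set (Euc d)} (hS : IsClosed S)
    (hw : ∀ z ∈ frontier S, WedgedAt S z) : closure (interior S) = S := by
  refine (closure_minimal interior_subset hS).antisymm fun z hz => ?_
  by_cases hzi : z ∈ interior S
  · exact subset_closure hzi
  obtain ⟨v, δ, hδ, hv⟩ := (hw z ⟨subset_closure hz, hzi⟩).exists_inner_le_neg
  exact (isHypertangent_of_inner_le_neg hS hδ hv).mem_closure_interior hz

theorem WedgedAt.closure_compl {S : Set (Euc d)} (hS : IsClosed S) {x : Euc d}
    (h : WedgedAt S x) : WedgedAt (closure Sᶜ) x := by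
  have hN := clarkeNormalCone_eq_innerDual_innerDual h.isClosed_clarkeNormalCone
  have hsub : clarkeNormalCone (closure Sᶜ) x ⊆ -clarkeNormalCone S x := fun p hp => by
    rw [Set.mem_neg, hN, SetLike.mem_coe, mem_innerDual]
    intro u hu
    have := mem_innerDual.1 (clarkeNormalCone_subset_innerDual_innerDual _ x hp)
      (h.innerDual_limProxDirs_subset hS hu)
    rwa [inner_neg_left, ← inner_neg_right] at this
  refine subset_antisymm ?_ ?_
  · rintro p ⟨hp, hnp⟩
    have hmem : -p ∈ clarkeNormalCone S x ∩ -clarkeNormalCone S x :=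
      ⟨hsub hp, by simpa using hsub hnp⟩
    rw [h, mem_singleton_iff, neg_eq_zero] at hmem
    exact hmem
  · rintro _ rfl
    exact ⟨zero_mem_clarkeNormalCone _ x, by simpa using zero_mem_clarkeNormalCone _ x⟩

end Complement

/-- **Relation (2.10) (cones of the complement).** For a closed set `S` wedged at every
boundary point and `x ∈ ∂S`, writing `S' = closure(ℝ^d ∖ S)`, one has
`N_S^C(x) = −N_{S'}^C(x)` and `T_S^C(x) = −T_{S'}^C(x)`. -/
theorem cones_of_complement {d : ℕ} (S : Set (Euc d)) (hS : IsClosed S)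
    (hw : ∀ z ∈ frontier S, WedgedAt S z) (x : Euc d) (hx : x ∈ frontier S) :
    clarkeNormalCone S x = -(clarkeNormalCone (closure Sᶜ) x) ∧
    clarkeTangentCone S x = -(clarkeTangentCone (closure Sᶜ) x) := by
  have hwx := hw x hx
  have hwx' := hwx.closure_compl hS
  have hS' : closure (closure Sᶜ)ᶜ = S := by
    rw [← interior_compl, compl_compl, closure_interior_eq_of_wedgedAt hS hw]
  have hdual : (innerDual (limProxDirs S x) : Set (Euc d)) =
      -innerDual (limProxDirs (closure Sᶜ) x) := by
    refine (hwx.innerDual_limProxDirs_subset hS).antisymm (Set.neg_subset.2 ?_)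
    have := hwx'.innerDual_limProxDirs_subset isClosed_closure
    rwa [hS'] at this
  constructor
  · rw [clarkeNormalCone_eq_innerDual_innerDual hwx.isClosed_clarkeNormalCone, hdual,
      ProperCone.coe_innerDual_neg,
      ← clarkeNormalCone_eq_innerDual_innerDual hwx'.isClosed_clarkeNormalCone]
  · rw [clarkeTangentCone_eq_neg_innerDual, clarkeTangentCone_eq_neg_innerDual, hdual]
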